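/- arXiv:2408.13150 — 7 statements merged into one kernel-verified Lean document; each statement's English description precedes it below -/
import Mathlib

section
/- Let F : ℝ^d → ℝ be convex and differentiable, let x ∈ ℝ^d, d ∈ ℝ^d, c ∈ (0,1), α₀ > 0 and ρ ∈ (0,1). Let b : ℕ → ℝ be a sequence of tentative step sizes with b(0) = α₀, b(n) > 0 for all n, and such that b(n+1) ≤ ρ·b(n) whenever the Armijo condition fails at step size b(n). If the Armijo condition holds at the step size ρ^N · α₀ for some natural number N, then there exists n ≤ N such that the Armijo condition holds at the step size b(n). (In words: for convex differentiable objectives, adaptive backtracking with any per-step adjustment factor at most ρ returns a feasible step size within no more adjustments than regular backtracking with constant factor ρ.) -/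
open RealInnerProductSpace

theorem adaptive_backtracking_no_more_evals_of_convex {d : ℕ}
    (F : EuclideanSpace ℝ (Fin d) → ℝ)
    (hconv : ConvexOn ℝ Set.univ F) (hdiff : Differentiable ℝ F)
    (x dir : EuclideanSpace ℝ (Fin d)) (c : ℝ) (hc : c ∈ Set.Ioo (0:ℝ) 1)
    (α₀ : ℝ) (hα₀ : 0 < α₀) (ρ : ℝ) (hρ : ρ ∈ Set.Ioo (0:ℝ) 1)
    (b : ℕ → ℝ) (hb0 : b 0 = α₀) (hbpos : ∀ n, 0 < b n)
    (hbstep : ∀ n,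
      ¬(F (x + b n • dir) ≤ F x + c * b n * ⟪gradient F x, dir⟫) →
      b (n + 1) ≤ ρ * b n)
    (N : ℕ)
    (hfeas : F (x + (ρ ^ N * α₀) • dir) ≤ F x + c * (ρ ^ N * α₀) * ⟪gradient F x, dir⟫) :
    ∃ n ≤ N, F (x + b n • dir) ≤ F x + c * b n * ⟪gradient F x, dir⟫ := by
  set g := ⟪gradient F x, dir⟫ with hg
  -- downward closedness of Armijo condition for convex F
  have mono : ∀ α β : ℝ, 0 < β → β ≤ α →
      F (x + α • dir) ≤ F x + c * α * g → F (x + β • dir) ≤ F x + c * β * g := by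
    intro α β hβ hβα hA
    have hα : 0 < α := lt_of_lt_of_le hβ hβα
    set t : ℝ := β / α with ht
    have ht0 : 0 < t := div_pos hβ hα
    have ht1 : t ≤ 1 := (div_le_one hα).2 hβα
    have key : x + β • dir = (1 - t) • x + t • (x + α • dir) := by
      have : t * α = β := div_mul_cancel₀ β hα.ne'
      rw [smul_add, smul_smul, this]
      module
    have := hconv.2 (Set.mem_univ x) (Set.mem_univ (x + α • dir))
      (by linarith : (0:ℝ) ≤ 1 - t) ht0.le (by ring)
    rw [← key] at this
    calc F (x + β • dir) ≤ (1 - t) * F x + t * F (x + α • dir) := by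
          simpa using this
      _ ≤ (1 - t) * F x + t * (F x + c * α * g) := by nlinarith
      _ = F x + c * (t * α) * g := by ring
      _ = F x + c * β * g := by rw [div_mul_cancel₀ β hα.ne']
  by_contra h
  push_neg at h
  -- all b n for n ≤ N fail, so b n ≤ ρ^n * α₀
  have hbd : ∀ n ≤ N, b n ≤ ρ ^ n * α₀ := by
    intro n hn
    induction n with
    | zero => simp [hb0]
    | succ k ih =>
      have hk : k ≤ N := Nat.le_of_succ_le hn
      have hfail := h k hk
      have := hbstep k (not_le.mpr hfail)
      calc b (k + 1) ≤ ρ * b k := this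
        _ ≤ ρ * (ρ ^ k * α₀) := by
            exact mul_le_mul_of_nonneg_left (ih hk) hρ.1.le
        _ = ρ ^ (k + 1) * α₀ := by ring
  exact absurd (mono (ρ ^ N * α₀) (b N) (hbpos N) (hbd N le_rfl) hfeas) (not_le.mpr (h N le_rfl))
end

section
/- Let F : ℝ^d → ℝ be differentiable and L-Lipschitz-smooth for some L > 0, i.e. F(y) ≤ F(x) + ⟪∇F(x), y - x⟫ + (L/2)·‖y - x‖² for all x, y ∈ ℝ^d. Let x ∈ ℝ^d, let d ∈ ℝ^d be a descent direction at x (i.e. ⟪∇F(x), d⟫ < 0), and let c ∈ (0,1). Then the Armijo condition F(x + α·d) ≤ F(x) + c·α·⟪∇F(x), d⟫ holds for every step size α with 0 < α ≤ 2(1-c)·⟪∇F(x), -d⟫ / (L·‖d‖²). -/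
open RealInnerProductSpace

theorem armijo_feasible_of_lipschitz_smooth {d : ℕ}
    (F : EuclideanSpace ℝ (Fin d) → ℝ) (hdiff : Differentiable ℝ F)
    (L : ℝ) (hL : 0 < L)
    (hsmooth : ∀ x y : EuclideanSpace ℝ (Fin d),
      F y ≤ F x + ⟪gradient F x, y - x⟫ + (L / 2) * ‖y - x‖ ^ 2)
    (x dir : EuclideanSpace ℝ (Fin d))
    (hdesc : ⟪gradient F x, dir⟫ < 0)
    (c : ℝ) (hc : c ∈ Set.Ioo (0:ℝ) 1) :
    ∀ α : ℝ, 0 < α → α ≤ 2 * (1 - c) * ⟪gradient F x, -dir⟫ / (L * ‖dir‖ ^ 2) →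
      F (x + α • dir) ≤ F x + c * α * ⟪gradient F x, dir⟫ := by
  intro α hα hαle
  have hdir : dir ≠ 0 := by
    intro h; rw [h, inner_zero_right] at hdesc; exact lt_irrefl _ hdesc
  have hnorm : 0 < ‖dir‖ ^ 2 := by
    have := norm_pos_iff.mpr hdir; positivity
  have hkey := hsmooth x (x + α • dir)
  have hsub : x + α • dir - x = α • dir := by abel
  rw [hsub, real_inner_smul_right, norm_smul] at hkey
  have hexp : (‖α‖ * ‖dir‖) ^ 2 = α ^ 2 * ‖dir‖ ^ 2 := by
    rw [mul_pow, Real.norm_eq_abs, sq_abs]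
  rw [hexp] at hkey
  refine hkey.trans ?_
  -- need:  α * ⟪g,dir⟫ + L/2 * (α^2 * ‖dir‖^2) ≤ c * α * ⟪g,dir⟫
  have h2 : α * (L * ‖dir‖ ^ 2) ≤ 2 * (1 - c) * ⟪gradient F x, -dir⟫ := by
    have hpos : (0:ℝ) < L * ‖dir‖ ^ 2 := by positivity
    calc α * (L * ‖dir‖ ^ 2) ≤ 2 * (1 - c) * ⟪gradient F x, -dir⟫ / (L * ‖dir‖ ^ 2) * (L * ‖dir‖ ^ 2) := by
          exact mul_le_mul_of_nonneg_right hαle hpos.le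
      _ = 2 * (1 - c) * ⟪gradient F x, -dir⟫ := div_mul_cancel₀ _ hpos.ne'
  rw [inner_neg_right] at h2
  nlinarith [hc.1, hc.2]
end

section
/- Let F : ℝ^d → ℝ be differentiable and L-Lipschitz-smooth for some L > 0. Let x ∈ ℝ^d and let d ∈ ℝ^d be a direction that is gradient related at x with constants c₁ > 0 and c₂ > 0, i.e. ⟪∇F(x), -d⟫ ≥ c₁·‖∇F(x)‖² and ‖d‖ ≤ c₂·‖∇F(x)‖, and assume d is a descent direction at x (⟪∇F(x), d⟫ < 0). Let c ∈ (0,1). Then the Armijo condition F(x + α·d) ≤ F(x) + c·α·⟪∇F(x), d⟫ holds for every step size α with 0 < α ≤ 2(1-c)·c₁ / (L·c₂²); this threshold is independent of x and d. -/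
open RealInnerProductSpace

theorem armijo_feasible_of_gradient_related {d : ℕ}
    (F : EuclideanSpace ℝ (Fin d) → ℝ) (hdiff : Differentiable ℝ F)
    (L : ℝ) (hL : 0 < L)
    (hsmooth : ∀ x y : EuclideanSpace ℝ (Fin d),
      F y ≤ F x + ⟪gradient F x, y - x⟫ + (L / 2) * ‖y - x‖ ^ 2)
    (x dir : EuclideanSpace ℝ (Fin d))
    (c₁ c₂ : ℝ) (hc₁ : 0 < c₁) (hc₂ : 0 < c₂)
    (hgr₁ : ⟪gradient F x, -dir⟫ ≥ c₁ * ‖gradient F x‖ ^ 2)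
    (hgr₂ : ‖dir‖ ≤ c₂ * ‖gradient F x‖)
    (hdesc : ⟪gradient F x, dir⟫ < 0)
    (c : ℝ) (hc : c ∈ Set.Ioo (0:ℝ) 1) :
    ∀ α : ℝ, 0 < α → α ≤ 2 * (1 - c) * c₁ / (L * c₂ ^ 2) →
      F (x + α • dir) ≤ F x + c * α * ⟪gradient F x, dir⟫ := by
  intro α hα hαle
  have key := hsmooth x (x + α • dir)
  have h1 : x + α • dir - x = α • dir := by abel
  rw [h1] at key
  have hinner : ⟪gradient F x, α • dir⟫ = α * ⟪gradient F x, dir⟫ :=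
    real_inner_smul_right _ _ _
  have hnorm : ‖α • dir‖ ^ 2 = α ^ 2 * ‖dir‖ ^ 2 := by
    rw [norm_smul, Real.norm_eq_abs, mul_pow, sq_abs]
  rw [hinner, hnorm] at key
  have hneg : -⟪gradient F x, dir⟫ ≥ c₁ * ‖gradient F x‖ ^ 2 := by
    rwa [inner_neg_right] at hgr₁
  have hd2 : ‖dir‖ ^ 2 ≤ c₂ ^ 2 * ‖gradient F x‖ ^ 2 := by
    have := pow_le_pow_left₀ (norm_nonneg dir) hgr₂ 2
    calc ‖dir‖ ^ 2 ≤ (c₂ * ‖gradient F x‖) ^ 2 := this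
    _ = c₂ ^ 2 * ‖gradient F x‖ ^ 2 := by ring
  -- main: α * ⟪g,dir⟫ + (L/2) α² ‖dir‖² ≤ c * α * ⟪g,dir⟫
  have hmain : α * ⟪gradient F x, dir⟫ + L / 2 * (α ^ 2 * ‖dir‖ ^ 2)
      ≤ c * α * ⟪gradient F x, dir⟫ := by
    have hstep : L / 2 * (α * ‖dir‖ ^ 2) ≤ (1 - c) * (-⟪gradient F x, dir⟫) := by
      have h2 : L / 2 * (α * ‖dir‖ ^ 2) ≤ L / 2 * (α * (c₂ ^ 2 * ‖gradient F x‖ ^ 2)) := by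
        apply mul_le_mul_of_nonneg_left _ (by positivity)
        exact mul_le_mul_of_nonneg_left hd2 hα.le
      have h3 : L / 2 * (α * (c₂ ^ 2 * ‖gradient F x‖ ^ 2))
          ≤ (1 - c) * (c₁ * ‖gradient F x‖ ^ 2) := by
        have hα2 : α * (L * c₂ ^ 2) ≤ 2 * (1 - c) * c₁ := by
          have hpos : 0 < L * c₂ ^ 2 := by positivity
          calc α * (L * c₂ ^ 2) ≤ 2 * (1 - c) * c₁ / (L * c₂ ^ 2) * (L * c₂ ^ 2) :=
              mul_le_mul_of_nonneg_right hαle hpos.le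
          _ = 2 * (1 - c) * c₁ := div_mul_cancel₀ _ hpos.ne'
        nlinarith [sq_nonneg ‖gradient F x‖]
      have h4 : (1 - c) * (c₁ * ‖gradient F x‖ ^ 2) ≤ (1 - c) * (-⟪gradient F x, dir⟫) :=
        mul_le_mul_of_nonneg_left hneg (by linarith [hc.2])
      linarith
    nlinarith
  linarith
end

section
/- Let F : ℝ^d → ℝ be differentiable and L-Lipschitz-smooth for some L > 0, let x ∈ ℝ^d, let d ∈ ℝ^d be a descent direction at x (⟪∇F(x), d⟫ < 0), let c ∈ (0,1) and ρ ∈ (0,1), and suppose the Armijo condition fails at a step size α > 0, i.e. F(x + α·d) - F(x) > c·α·⟪∇F(x), d⟫. Then, with the Armijo violation v(α) := (F(x + α·d) - F(x)) / (c·α·⟪∇F(x), d⟫), the adaptively adjusted step size satisfies ρ·((1-c)/(1 - c·v(α)))·α ≥ ρ·2(1-c)·⟪∇F(x), -d⟫ / (L·‖d‖²). If moreover d is gradient related at x with constants c₁, c₂ > 0, then ρ·((1-c)/(1 - c·v(α)))·α ≥ ρ·2(1-c)·c₁ / (L·c₂²) > 0. -/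
set_option maxHeartbeats 1000000


open RealInnerProductSpace

theorem adaptive_step_size_lower_bound {d : ℕ}
    (F : EuclideanSpace ℝ (Fin d) → ℝ) (hdiff : Differentiable ℝ F)
    (L : ℝ) (hL : 0 < L)
    (hsmooth : ∀ x y : EuclideanSpace ℝ (Fin d),
      F y ≤ F x + ⟪gradient F x, y - x⟫ + (L / 2) * ‖y - x‖ ^ 2)
    (x dir : EuclideanSpace ℝ (Fin d))
    (hdesc : ⟪gradient F x, dir⟫ < 0)
    (c ρ : ℝ) (hc : c ∈ Set.Ioo (0:ℝ) 1) (hρ : ρ ∈ Set.Ioo (0:ℝ) 1)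
    (α : ℝ) (hα : 0 < α)
    (hviol : F (x + α • dir) - F x > c * α * ⟪gradient F x, dir⟫) :
    ρ * ((1 - c) /
        (1 - c * ((F (x + α • dir) - F x) / (c * α * ⟪gradient F x, dir⟫)))) * α ≥
      ρ * (2 * (1 - c) * ⟪gradient F x, -dir⟫) / (L * ‖dir‖ ^ 2) ∧
    ∀ c₁ c₂ : ℝ, 0 < c₁ → 0 < c₂ →
      ⟪gradient F x, -dir⟫ ≥ c₁ * ‖gradient F x‖ ^ 2 →
      ‖dir‖ ≤ c₂ * ‖gradient F x‖ →
      ρ * ((1 - c) /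
          (1 - c * ((F (x + α • dir) - F x) / (c * α * ⟪gradient F x, dir⟫)))) * α ≥
        ρ * (2 * (1 - c) * c₁) / (L * c₂ ^ 2) ∧
      ρ * (2 * (1 - c) * c₁) / (L * c₂ ^ 2) > 0 := by
  obtain ⟨hc0, hc1⟩ := hc
  obtain ⟨hρ0, hρ1⟩ := hρ
  have hg0 : 0 < ‖gradient F x‖ := by
    have h : gradient F x ≠ 0 := by
      intro h; rw [h] at hdesc; simp at hdesc
    exact norm_pos_iff.mpr h
  have hdir : dir ≠ 0 := by
    intro h; rw [h] at hdesc; simp at hdesc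
  have hN : (0:ℝ) < ‖dir‖ ^ 2 := pow_pos (norm_pos_iff.mpr hdir) 2
  set G := ⟪gradient F x, dir⟫ with hG
  have hneg : c * α * G < 0 := mul_neg_of_pos_of_neg (mul_pos hc0 hα) hdesc
  set D := F (x + α • dir) - F x with hD
  have hsm : D ≤ α * G + L / 2 * (α ^ 2 * ‖dir‖ ^ 2) := by
    have h := hsmooth x (x + α • dir)
    have h1 : x + α • dir - x = α • dir := by abel
    rw [h1] at h
    have h2 : ⟪gradient F x, α • dir⟫ = α * G := real_inner_smul_right _ _ _
    have h3 : ‖α • dir‖ ^ 2 = α ^ 2 * ‖dir‖ ^ 2 := by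
      rw [norm_smul, mul_pow, Real.norm_eq_abs, sq_abs]
    rw [h2, h3] at h
    rw [hD]; linarith
  set v := D / (c * α * G) with hv
  have hDv : D = v * (c * α * G) := by
    rw [hv, div_mul_cancel₀ _ hneg.ne]
  have hv1 : v < 1 := by
    rw [hv]
    exact (div_lt_one_of_neg hneg).mpr hviol
  have hpos : 0 < 1 - c * v := by nlinarith
  have key : 2 * (-G) * (1 - c * v) ≤ L * ‖dir‖ ^ 2 * α := by
    nlinarith [hsm, hDv, hα, mul_pos hα hN, sq_nonneg α]
  have main : ρ * ((1 - c) / (1 - c * v)) * α ≥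
      ρ * (2 * (1 - c) * (-G)) / (L * ‖dir‖ ^ 2) := by
    rw [ge_iff_le, div_le_iff₀ (by positivity),
      show ρ * ((1 - c) / (1 - c * v)) * α * (L * ‖dir‖ ^ 2)
        = ρ * (1 - c) * α * (L * ‖dir‖ ^ 2) / (1 - c * v) by ring,
      le_div_iff₀ hpos]
    nlinarith [mul_le_mul_of_nonneg_left key
      (by nlinarith : (0:ℝ) ≤ ρ * (1 - c))]
  constructor
  · rw [inner_neg_right, ← hG]
    exact main
  · intro c₁ c₂ hc₁ hc₂ hgr hdn
    rw [inner_neg_right, ← hG] at hgr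
    have hN2 : ‖dir‖ ^ 2 ≤ c₂ ^ 2 * ‖gradient F x‖ ^ 2 := by
      nlinarith [norm_nonneg dir]
    constructor
    · refine ge_trans main ?_
      rw [div_le_div_iff₀ (by positivity) (mul_pos hL hN)]
      nlinarith [mul_le_mul_of_nonneg_left hN2 (mul_nonneg hc₁.le hL.le),
        mul_le_mul_of_nonneg_left hgr (mul_nonneg (sq_nonneg c₂) hL.le),
        mul_pos hρ0 (by nlinarith : (0:ℝ) < 1 - c)]
    · exact div_pos (mul_pos hρ0 (mul_pos (by linarith : (0:ℝ) < 2 * (1 - c)) hc₁)) (by positivity)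
end

section
/- Let F : ℝ^d → ℝ be differentiable and L-Lipschitz-smooth for some L > 0, let x ∈ ℝ^d, let d ∈ ℝ^d be a descent direction at x (⟪∇F(x), d⟫ < 0), and let c ∈ (0,1). If the Armijo condition fails at a step size α > 0, i.e. F(x + α·d) - F(x) > c·α·⟪∇F(x), d⟫, then α > 2(1-c)·⟪∇F(x), -d⟫ / (L·‖d‖²). Consequently, if additionally d is gradient related at x with constants c₁, c₂ > 0, then α > 2(1-c)·c₁ / (L·c₂²), and hence one backtracking adjustment by the constant factor ρ ∈ (0,1) yields ρ·α ≥ ρ·2(1-c)·c₁ / (L·c₂²). -/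
open RealInnerProductSpace

theorem infeasible_step_size_lower_bound {d : ℕ}
    (F : EuclideanSpace ℝ (Fin d) → ℝ) (hdiff : Differentiable ℝ F)
    (L : ℝ) (hL : 0 < L)
    (hsmooth : ∀ x y : EuclideanSpace ℝ (Fin d),
      F y ≤ F x + ⟪gradient F x, y - x⟫ + (L / 2) * ‖y - x‖ ^ 2)
    (x dir : EuclideanSpace ℝ (Fin d))
    (hdesc : ⟪gradient F x, dir⟫ < 0)
    (c : ℝ) (hc : c ∈ Set.Ioo (0:ℝ) 1)
    (α : ℝ) (hα : 0 < α)
    (hviol : F (x + α • dir) - F x > c * α * ⟪gradient F x, dir⟫) :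
    α > 2 * (1 - c) * ⟪gradient F x, -dir⟫ / (L * ‖dir‖ ^ 2) ∧
    ∀ c₁ c₂ : ℝ, 0 < c₁ → 0 < c₂ →
      ⟪gradient F x, -dir⟫ ≥ c₁ * ‖gradient F x‖ ^ 2 →
      ‖dir‖ ≤ c₂ * ‖gradient F x‖ →
      α > 2 * (1 - c) * c₁ / (L * c₂ ^ 2) ∧
      ∀ ρ : ℝ, ρ ∈ Set.Ioo (0:ℝ) 1 →
        ρ * α ≥ ρ * (2 * (1 - c) * c₁ / (L * c₂ ^ 2)) := by

  obtain ⟨hc0, hc1⟩ := hc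
  set g := gradient F x with hg
  have hdir : dir ≠ 0 := by
    intro h; rw [h, inner_zero_right] at hdesc; exact lt_irrefl 0 hdesc
  have hN : (0:ℝ) < ‖dir‖ ^ 2 := pow_pos (norm_pos_iff.mpr hdir) 2
  have hsm := hsmooth x (x + α • dir)
  have hsub : x + α • dir - x = α • dir := by abel
  rw [hsub, real_inner_smul_right, norm_smul] at hsm
  have hkey : 2 * (1 - c) * (-⟪g, dir⟫) < α * (L * ‖dir‖ ^ 2) := by
    rw [Real.norm_eq_abs, abs_of_pos hα] at hsm
    nlinarith [mul_pos hα hN]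
  have hinner : ⟪g, -dir⟫ = -⟪g, dir⟫ := inner_neg_right g dir
  have h1 : α > 2 * (1 - c) * ⟪g, -dir⟫ / (L * ‖dir‖ ^ 2) := by
    rw [hinner, gt_iff_lt, div_lt_iff₀ (by positivity)]
    linarith [hkey]
  refine ⟨h1, fun c₁ c₂ hc₁ hc₂ hgr1 hgr2 => ?_⟩
  have hgne : g ≠ 0 := by
    intro h; rw [h, inner_zero_left] at hdesc; exact lt_irrefl 0 hdesc
  have hgpos : (0:ℝ) < ‖g‖ := norm_pos_iff.mpr hgne
  rw [hinner] at hgr1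
  have hd2 : ‖dir‖ ^ 2 ≤ c₂ ^ 2 * ‖g‖ ^ 2 := by
    have := sq_le_sq' (by nlinarith [norm_nonneg dir]) hgr2
    nlinarith
  have h2 : α > 2 * (1 - c) * c₁ / (L * c₂ ^ 2) := by
    rw [gt_iff_lt, div_lt_iff₀ (by positivity)]
    have h3 : 2 * (1 - c) * c₁ * (‖g‖ ^ 2) ≤ 2 * (1 - c) * (-⟪g, dir⟫) := by
      nlinarith
    have h4 : α * (L * ‖dir‖ ^ 2) ≤ α * (L * c₂ ^ 2) * ‖g‖ ^ 2 := by
      nlinarith [mul_pos hα hL]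
    have h5 : 2 * (1 - c) * c₁ * ‖g‖ ^ 2 < α * (L * c₂ ^ 2) * ‖g‖ ^ 2 := by
      linarith [hkey]
    exact lt_of_mul_lt_mul_right (by linarith) (le_of_lt (pow_pos hgpos 2))
  refine ⟨h2, fun ρ hρ => ?_⟩
  exact mul_le_mul_of_nonneg_left h2.le hρ.1.le
end

section
/- Let F : ℝ^d → ℝ be differentiable and L-Lipschitz-smooth for some L > 0, let c ∈ (0,1), ρ ∈ (0,1), c₁ > 0, c₂ > 0, and set ᾱ := 2(1-c)·c₁ / (L·c₂²). Let α₀ > ᾱ and let n := ⌊log(ᾱ/α₀) / log ρ⌋ + 1 (the base-ρ logarithm of ᾱ/α₀, rounded down, plus one). Then ρ^n · α₀ < ᾱ, and consequently for every point x and every direction d that is gradient related at x with constants c₁, c₂ and is a descent direction at x, the Armijo condition holds at the step size ρ^n · α₀. In particular, regular backtracking from the initial step size α₀ with factor ρ needs at most ⌊log_ρ(ᾱ/α₀)⌋ + 1 adjustments to produce a uniformly feasible step size. -/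
open RealInnerProductSpace

set_option maxHeartbeats 1000000 in
theorem backtracking_adjustment_bound {d : ℕ}
    (F : EuclideanSpace ℝ (Fin d) → ℝ) (hdiff : Differentiable ℝ F)
    (L : ℝ) (hL : 0 < L)
    (hsmooth : ∀ x y : EuclideanSpace ℝ (Fin d),
      F y ≤ F x + ⟪gradient F x, y - x⟫ + (L / 2) * ‖y - x‖ ^ 2)
    (c ρ : ℝ) (hc : c ∈ Set.Ioo (0:ℝ) 1) (hρ : ρ ∈ Set.Ioo (0:ℝ) 1)
    (c₁ c₂ : ℝ) (hc₁ : 0 < c₁) (hc₂ : 0 < c₂)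
    (ᾱ : ℝ) (hᾱ : ᾱ = 2 * (1 - c) * c₁ / (L * c₂ ^ 2))
    (α₀ : ℝ) (hα₀ : ᾱ < α₀)
    (n : ℤ) (hn : n = ⌊Real.log (ᾱ / α₀) / Real.log ρ⌋ + 1) :
    ρ ^ n * α₀ < ᾱ ∧
    ∀ x dir : EuclideanSpace ℝ (Fin d),
      ⟪gradient F x, -dir⟫ ≥ c₁ * ‖gradient F x‖ ^ 2 →
      ‖dir‖ ≤ c₂ * ‖gradient F x‖ →
      ⟪gradient F x, dir⟫ < 0 →
      F (x + (ρ ^ n * α₀) • dir) ≤ F x + c * (ρ ^ n * α₀) * ⟪gradient F x, dir⟫ := by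
  obtain ⟨hc0, hc1⟩ := hc
  obtain ⟨hρ0, hρ1⟩ := hρ
  have hᾱpos : 0 < ᾱ := by
    rw [hᾱ]; apply div_pos (by nlinarith) (by positivity)
  have hα₀pos : 0 < α₀ := hᾱpos.trans hα₀
  have hlogρ : Real.log ρ < 0 := Real.log_neg hρ0 hρ1
  have hfloor : Real.log (ᾱ / α₀) / Real.log ρ < (n : ℝ) := by
    rw [hn]; push_cast; exact Int.lt_floor_add_one _
  have hmul : (n : ℝ) * Real.log ρ < Real.log (ᾱ / α₀) :=
    (div_lt_iff_of_neg hlogρ).mp hfloor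
  have hzpos : (0 : ℝ) < ρ ^ n := zpow_pos hρ0 n
  have hαpos : 0 < ρ ^ n * α₀ := by positivity
  have h1 : ρ ^ n * α₀ < ᾱ := by
    rw [← Real.log_lt_log_iff hαpos hᾱpos,
      Real.log_mul (ne_of_gt hzpos) (ne_of_gt hα₀pos), Real.log_zpow]
    rw [Real.log_div (ne_of_gt hᾱpos) (ne_of_gt hα₀pos)] at hmul
    linarith
  refine ⟨h1, fun x dir hgr hnorm hdesc => ?_⟩
  set g := gradient F x with hg
  set α := ρ ^ n * α₀ with hα
  have hkey := hsmooth x (x + α • dir)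
  have hsub : x + α • dir - x = α • dir := by abel
  rw [hsub, real_inner_smul_right, norm_smul] at hkey
  have hneg : ⟪g, -dir⟫ = -⟪g, dir⟫ := inner_neg_right _ _
  rw [hneg] at hgr
  have hgpos : 0 < ‖g‖ := by
    by_contra h
    have : g = 0 := by
      have := norm_nonneg g; have : ‖g‖ = 0 := by linarith
      exact norm_eq_zero.mp this
    rw [this] at hdesc; simp at hdesc
  have hᾱ' : ᾱ * (L * c₂ ^ 2) = 2 * (1 - c) * c₁ := by
    rw [hᾱ]; field_simp
  have hαn : ‖α‖ = α := abs_of_pos hαpos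
  rw [hαn] at hkey
  obtain ⟨ip, hip⟩ : ∃ ip, ⟪g, dir⟫ = ip := ⟨_, rfl⟩
  rw [hip] at hkey hgr hdesc ⊢
  obtain ⟨ng, hng⟩ : ∃ ng, ‖g‖ = ng := ⟨_, rfl⟩
  rw [hng] at hgr hnorm hgpos
  obtain ⟨nd, hnd⟩ : ∃ nd, ‖dir‖ = nd := ⟨_, rfl⟩
  rw [hnd] at hkey hnorm
  have hndnn : 0 ≤ nd := hnd ▸ norm_nonneg dir
  obtain ⟨FA, hFA⟩ : ∃ v, F (x + α • dir) = v := ⟨_, rfl⟩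
  obtain ⟨FX, hFX⟩ : ∃ v, F x = v := ⟨_, rfl⟩
  rw [hFA, hFX] at hkey ⊢
  have hd2 : nd ^ 2 ≤ c₂ ^ 2 * ng ^ 2 := by nlinarith
  have hstep : (L / 2) * α * nd ^ 2 ≤ (1 - c) * (-ip) := by
    have h2 : (L / 2) * α * nd ^ 2 ≤ (L / 2) * α * (c₂ ^ 2 * ng ^ 2) :=
      mul_le_mul_of_nonneg_left hd2 (by positivity)
    have h3 : (L / 2) * α * (c₂ ^ 2 * ng ^ 2) ≤ (L / 2) * ᾱ * (c₂ ^ 2 * ng ^ 2) := by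
      apply mul_le_mul_of_nonneg_right (by nlinarith) (by positivity)
    have h4 : (L / 2) * ᾱ * (c₂ ^ 2 * ng ^ 2) = (1 - c) * (c₁ * ng ^ 2) := by
      linear_combination (ng ^ 2 / 2) * hᾱ'
    have h5 : (1 - c) * (c₁ * ng ^ 2) ≤ (1 - c) * (-ip) :=
      mul_le_mul_of_nonneg_left hgr (by linarith)
    linarith
  rw [mul_pow] at hkey
  have hmul2 : α * ((L / 2) * α * nd ^ 2) ≤ α * ((1 - c) * (-ip)) :=
    mul_le_mul_of_nonneg_left hstep hαpos.le
  nlinarith [hkey, hmul2]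
end

section
/- Let f : ℝ^d → ℝ be differentiable and L-Lipschitz-smooth for some L > 0, i.e. f(b) ≤ f(a) + ⟪∇f(a), b - a⟫ + (L/2)·‖b - a‖² for all a, b. Let y, p ∈ ℝ^d, α > 0 and ρ ∈ (0,1), and suppose the descent-lemma criterion is violated: f(p) - f(y) - ⟪∇f(y), p - y⟫ > (1/(2α))·‖p - y‖². Then, with v(α) := ((1/(2α))·‖p - y‖²) / (f(p) - f(y) - ⟪∇f(y), p - y⟫), the adaptively adjusted step size satisfies ρ·v(α)·α ≥ ρ/L. -/
open RealInnerProductSpace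

theorem adaptive_descent_lemma_step_lower_bound {d : ℕ}
    (f : EuclideanSpace ℝ (Fin d) → ℝ) (hdiff : Differentiable ℝ f)
    (L : ℝ) (hL : 0 < L)
    (hsmooth : ∀ a b : EuclideanSpace ℝ (Fin d),
      f b ≤ f a + ⟪gradient f a, b - a⟫ + (L / 2) * ‖b - a‖ ^ 2)
    (y p : EuclideanSpace ℝ (Fin d)) (α : ℝ) (hα : 0 < α)
    (ρ : ℝ) (hρ : ρ ∈ Set.Ioo (0:ℝ) 1)
    (hviol : f p - f y - ⟪gradient f y, p - y⟫ > (1 / (2 * α)) * ‖p - y‖ ^ 2) :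
    ρ * (((1 / (2 * α)) * ‖p - y‖ ^ 2) / (f p - f y - ⟪gradient f y, p - y⟫)) * α ≥
      ρ / L := by
  set D := f p - f y - ⟪gradient f y, p - y⟫ with hD
  have hsq : 0 ≤ ‖p - y‖ ^ 2 := sq_nonneg _
  have hDpos : 0 < D := lt_of_le_of_lt (by positivity) hviol
  have hDle : D ≤ (L / 2) * ‖p - y‖ ^ 2 := by
    have := hsmooth y p
    simp only [hD]; linarith
  have hsqpos : 0 < ‖p - y‖ ^ 2 := by
    by_contra h
    have : ‖p - y‖ ^ 2 = 0 := le_antisymm (not_lt.mp h) hsq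
    rw [this] at hDle; nlinarith
  have key : ρ * (((1 / (2 * α)) * ‖p - y‖ ^ 2) / D) * α = ρ * ‖p - y‖ ^ 2 / (2 * D) := by
    field_simp
  rw [key, ge_iff_le, div_le_div_iff₀ hL (by linarith)]
  nlinarith [hρ.1]
end
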